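/- (Dimension formula for transverse cones) For any face F of a convex polyhedral cone C in a Euclidean space, dim(C) = dim(F) + dim(t(C,F)). -/

import Mathlib

/-- The closed convex polyhedral cone generated by vectors `v 0, …, v (n-1)`. -/
def polyCone {V : Type*} [AddCommGroup V] [Module ℝ V] {n : ℕ} (v : Fin n → V) : Set V :=
  {x | ∃ c : Fin n → ℝ, (∀ i, 0 ≤ c i) ∧ x = ∑ i, c i • v i}

/-- `C` is a (closed convex) polyhedral cone. -/
def IsPolyCone {V : Type*} [AddCommGroup V] [Module ℝ V] (C : Set V) : Prop :=
  ∃ (n : ℕ) (v : Fin n → V), C = polyCone v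

/-- `F` is a face of the cone `C` (cut out by a supporting linear functional). -/
def IsFace {V : Type*} [AddCommGroup V] [Module ℝ V] (C F : Set V) : Prop :=
  ∃ ℓ : V →ₗ[ℝ] ℝ, (∀ x ∈ C, ℓ x ≤ 0) ∧ F = {x ∈ C | ℓ x = 0}

variable {V : Type*} [NormedAddCommGroup V] [InnerProductSpace ℝ V] [FiniteDimensional ℝ V]

/-- The transverse cone `t(C,F)`: the image of `C` under the orthogonal projection onto
the orthogonal complement of the linear span of `F`. -/
noncomputable def tCone (C F : Set V) : Set V :=
  (fun x => (Submodule.orthogonalProjectionOnto (Submodule.span ℝ F)ᗮ x : V)) '' C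

open Module Submodule

theorem LinearMap.finrank_map_add_finrank_ker_of_ker_le {K M M₂ : Type*} [DivisionRing K]
    [AddCommGroup M] [Module K M] [AddCommGroup M₂] [Module K M₂] (f : M →ₗ[K] M₂)
    {U : Submodule K M} [FiniteDimensional K U] (h : LinearMap.ker f ≤ U) :
    finrank K (U.map f) + finrank K (LinearMap.ker f) = finrank K U := by
  have hrank := (f.domRestrict U).finrank_range_add_finrank_ker
  rwa [LinearMap.range_domRestrict, LinearMap.ker_domRestrict,
    (comapSubtypeEquivOfLe h).finrank_eq] at hrank

theorem IsFace.subset {M : Type*} [AddCommGroup M] [Module ℝ M] {C F : Set M}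
    (hF : IsFace C F) : F ⊆ C := by
  obtain ⟨ℓ, -, rfl⟩ := hF
  exact fun x hx => hx.1

theorem span_tCone (C F : Set V) :
    span ℝ (tCone C F) = (span ℝ C).map ((span ℝ F)ᗮ.starProjection : V →ₗ[ℝ] V) := by
  rw [← span_image]
  rfl

theorem dim_tCone_general (C F : Set V) (hF : IsFace C F) :
    Module.finrank ℝ (Submodule.span ℝ C) =
      Module.finrank ℝ (Submodule.span ℝ F) +
        Module.finrank ℝ (Submodule.span ℝ (tCone C F)) := by
  have hker : LinearMap.ker ((span ℝ F)ᗮ.starProjection : V →ₗ[ℝ] V) = span ℝ F := by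
    rw [ker_starProjection, orthogonal_orthogonal]
  have hker_le : LinearMap.ker ((span ℝ F)ᗮ.starProjection : V →ₗ[ℝ] V) ≤ span ℝ C :=
    hker.trans_le (span_mono hF.subset)
  rw [span_tCone, ← LinearMap.finrank_map_add_finrank_ker_of_ker_le _ hker_le, hker, add_comm]

/-- dimension formula for transverse cones: for any face `F` of a convex
polyhedral cone `C`, `dim C = dim F + dim t(C,F)`. -/
theorem dim_tCone (C F : Set V) (hC : IsPolyCone C) (hF : IsFace C F) :
    Module.finrank ℝ (Submodule.span ℝ C) =
      Module.finrank ℝ (Submodule.span ℝ F) +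
        Module.finrank ℝ (Submodule.span ℝ (tCone C F)) :=
  dim_tCone_general C F hF
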